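/- Implicit-function sensitivity of the group Lasso: if β* is the unique group Lasso solution at y with block support I and the strict condition ‖X_b^T(y − X β*)‖ < λ holds for all blocks b ∉ I, then there is a neighborhood of y on which the solution map is C¹ with constant block support I, and the differential of the solution restricted to I equals (X_I^T X_I + λ δ ∘ P)^{-1} X_I^T, where δ ∘ P is the block-diagonal map v ↦ (P_{β*_b^⊥}(v_b)/‖β*_b‖)_{b∈I}. -/

import Mathlib

open Matrix Finset

/-- Euclidean norm of the subvector of `β` on the block `k`. -/
noncomputable def blockNorm {N K : ℕ} (c : Fin N → Fin K) (β : Fin N → ℝ) (k : Fin K) : ℝ :=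
  Real.sqrt (∑ i ∈ Finset.univ.filter (fun i => c i = k), β i ^ 2)

/-- The group Lasso objective. -/
noncomputable def groupLassoObj {Q N K : ℕ} (X : Matrix (Fin Q) (Fin N) ℝ)
    (y : Fin Q → ℝ) (lam : ℝ) (c : Fin N → Fin K) (β : Fin N → ℝ) : ℝ :=
  (1 / 2) * (∑ i, (y i - X.mulVec β i) ^ 2) + lam * ∑ k, blockNorm c β k

/-!
Fix the block support `s` of `β*(y)`. The KKT conditions with this support pattern (stationarity
`λ β_b / ‖β_b‖ = X_bᵀ (w - X β)` on the blocks of `s`, `β_b = 0` on the others) form a smooth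
equation `G(w, β) = 0` whose partial derivative in `β` is `X_sᵀ X_s + λ δ_β ∘ P_β` on the active
rows. Since `δ_β ∘ P_β` is positive semidefinite (Cauchy–Schwarz) and `X` is injective, this
derivative is invertible, and the implicit function theorem gives a `C¹` solution `ψ` near `y`
with `ψ y = β*(y)`. By continuity `ψ w` keeps nonzero active blocks and strict dual feasibility
off `s`, so it satisfies the full KKT conditions and equals the unique minimiser `β*(w)`.
Differentiating `G(w, β*(w)) = 0` gives the differential.
-/

open Filter Topology

theorem fderiv_apply_prodMk_eq_zero {𝕜 E F G : Type*} [NontriviallyNormedField 𝕜]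
    [NormedAddCommGroup E] [NormedSpace 𝕜 E] [NormedAddCommGroup F] [NormedSpace 𝕜 F]
    [NormedAddCommGroup G] [NormedSpace 𝕜 G] {f : E × F → G} {g : E → F} {g' : E →L[𝕜] F}
    {w : E} (hf : DifferentiableAt 𝕜 f (w, g w)) (hg : HasFDerivAt g g' w)
    (h : ∀ᶠ w' in 𝓝 w, f (w', g w') = 0) (v : E) : fderiv 𝕜 f (w, g w) (v, g' v) = 0 := by
  have hcomp := hf.hasFDerivAt.comp w ((hasFDerivAt_id w).prodMk hg)
  have hzero : HasFDerivAt (fun w' => f (w', g w')) (0 : E →L[𝕜] G) w :=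
    (hasFDerivAt_const 0 w).congr_of_eventuallyEq h
  simpa using congrArg (· v) (hcomp.unique hzero)

namespace GroupLasso

variable {Q N K : ℕ}

section Blocks

variable (c : Fin N → Fin K)

def blockInner (k : Fin K) (a b : Fin N → ℝ) : ℝ :=
  ∑ i ∈ univ.filter (fun i => c i = k), a i * b i

noncomputable def blockSupport (β : Fin N → ℝ) : Finset (Fin K) :=
  univ.filter fun k => ∃ i, c i = k ∧ β i ≠ 0

variable {c}

lemma blockNorm_nonneg (β : Fin N → ℝ) (k : Fin K) : 0 ≤ blockNorm c β k :=
  Real.sqrt_nonneg _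

lemma blockNorm_sq (β : Fin N → ℝ) (k : Fin K) : blockNorm c β k ^ 2 = blockInner c k β β := by
  rw [blockNorm, Real.sq_sqrt (sum_nonneg fun _ _ => sq_nonneg _)]
  simp only [blockInner, sq]

lemma mem_blockSupport {β : Fin N → ℝ} {k : Fin K} :
    k ∈ blockSupport c β ↔ ∃ i, c i = k ∧ β i ≠ 0 := by
  simp [blockSupport]

lemma blockNorm_ne_zero_iff {β : Fin N → ℝ} {k : Fin K} :
    blockNorm c β k ≠ 0 ↔ k ∈ blockSupport c β := by
  rw [blockNorm, Real.sqrt_ne_zero', sum_pos_iff_of_nonneg fun _ _ => sq_nonneg _]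
  simp [blockSupport, sq_pos_iff]

lemma blockInner_sub_right (k : Fin K) (a b d : Fin N → ℝ) :
    blockInner c k a (b - d) = blockInner c k a b - blockInner c k a d := by
  simp only [blockInner, Pi.sub_apply, mul_sub, sum_sub_distrib]

lemma blockInner_le (k : Fin K) (a b : Fin N → ℝ) :
    blockInner c k a b ≤ blockNorm c a k * blockNorm c b k :=
  Real.sum_mul_le_sqrt_mul_sqrt _ _ _

lemma blockInner_sq_le (k : Fin K) (a b : Fin N → ℝ) :
    blockInner c k a b ^ 2 ≤ blockNorm c a k ^ 2 * blockNorm c b k ^ 2 := by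
  rw [blockNorm_sq, blockNorm_sq]
  simpa only [blockInner, sq] using sum_mul_sq_le_sq_mul_sq _ a b

lemma blockInner_eq_zero_of_blockNorm_eq_zero {a b : Fin N → ℝ} {k : Fin K}
    (h : blockNorm c b k = 0) : blockInner c k a b = 0 := by
  have := blockInner_sq_le (c := c) k a b
  rw [h] at this
  exact pow_eq_zero_iff two_ne_zero |>.1 (le_antisymm (by simpa using this) (sq_nonneg _))

lemma sum_blockInner (a b : Fin N → ℝ) : ∑ k, blockInner c k a b = a ⬝ᵥ b :=
  sum_fiberwise univ c fun i => a i * b i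

lemma hasDerivAt_blockNorm_line {β : Fin N → ℝ} (v : Fin N → ℝ) {k : Fin K}
    (h : blockNorm c β k ≠ 0) :
    HasDerivAt (fun t : ℝ => blockNorm c (β + t • v) k)
      (blockInner c k β v / blockNorm c β k) 0 := by
  have hsq : HasDerivAt (fun t : ℝ => ∑ i ∈ univ.filter (fun i => c i = k), (β + t • v) i ^ 2)
      (2 * blockInner c k β v) 0 := by
    have := HasDerivAt.fun_sum (u := univ.filter (fun i => c i = k)) fun i _ =>
      (((hasDerivAt_id (0 : ℝ)).mul_const (v i)).const_add (β i)).pow 2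
    simpa [blockInner, mul_sum, mul_assoc] using this
  have h0 : (∑ i ∈ univ.filter (fun i => c i = k), (β + (0 : ℝ) • v) i ^ 2) ≠ 0 := by
    rw [zero_smul, add_zero]
    exact fun h' => h (by rw [blockNorm, h', Real.sqrt_zero])
  convert hsq.sqrt h0 using 1
  · rfl
  rw [zero_smul, add_zero, ← blockNorm]
  field_simp

lemma continuous_blockNorm (k : Fin K) : Continuous fun β => blockNorm c β k := by
  unfold blockNorm
  fun_prop

lemma contDiffAt_blockNorm {β : Fin N → ℝ} {k : Fin K} {n : WithTop ℕ∞}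
    (h : blockNorm c β k ≠ 0) : ContDiffAt ℝ n (fun β => blockNorm c β k) β :=
  ContDiffAt.sqrt (by fun_prop) fun h' => h (by rw [blockNorm, h', Real.sqrt_zero])

end Blocks

section Optimality

variable (X : Matrix (Fin Q) (Fin N) ℝ) {c : Fin N → Fin K} {lam : ℝ}

lemma sum_sq_sub_mulVec (w : Fin Q → ℝ) (β : Fin N → ℝ) :
    ∑ q, (w q - X.mulVec β q) ^ 2 = (w - X *ᵥ β) ⬝ᵥ (w - X *ᵥ β) := by
  simp only [dotProduct, Pi.sub_apply, sq]

lemma blockInner_sub_le_of_subgradient {g β β' : Fin N → ℝ} {k : Fin K} (hlam : 0 ≤ lam)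
    (hstat : blockNorm c β k ≠ 0 → ∀ i, c i = k → g i = lam * (β i / blockNorm c β k))
    (hdual : blockNorm c β k = 0 → blockNorm c g k ≤ lam) :
    blockInner c k g (β' - β) ≤ lam * (blockNorm c β' k - blockNorm c β k) := by
  rw [blockInner_sub_right]
  by_cases hβ : blockNorm c β k = 0
  · rw [blockInner_eq_zero_of_blockNorm_eq_zero hβ, hβ, sub_zero, sub_zero]
    exact (blockInner_le k g β').trans
      (mul_le_mul_of_nonneg_right (hdual hβ) (blockNorm_nonneg _ _))
  · have hg : ∀ a, blockInner c k g a = lam / blockNorm c β k * blockInner c k β a := by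
      intro a
      simp only [blockInner, mul_sum]
      refine sum_congr rfl fun i hi => ?_
      rw [hstat hβ i (mem_filter.1 hi).2]
      ring
    have hn : 0 < blockNorm c β k := (blockNorm_nonneg _ _).lt_of_ne' hβ
    rw [hg, hg, ← blockNorm_sq]
    calc lam / blockNorm c β k * blockInner c k β β' - lam / blockNorm c β k * blockNorm c β k ^ 2
        ≤ lam / blockNorm c β k * (blockNorm c β k * blockNorm c β' k)
            - lam / blockNorm c β k * blockNorm c β k ^ 2 := by
          gcongr
          exact blockInner_le k β β'
      _ = lam * (blockNorm c β' k - blockNorm c β k) := by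
          field_simp

theorem isMinOn_groupLassoObj_of_kkt {w : Fin Q → ℝ} {β : Fin N → ℝ} (hlam : 0 ≤ lam)
    (hstat : ∀ i, blockNorm c β (c i) ≠ 0 →
      (Xᵀ *ᵥ (w - X *ᵥ β)) i = lam * (β i / blockNorm c β (c i)))
    (hdual : ∀ k, blockNorm c β k = 0 → blockNorm c (Xᵀ *ᵥ (w - X *ᵥ β)) k ≤ lam) :
    IsMinOn (groupLassoObj X w lam c) Set.univ β := by
  intro β' _
  set r := w - X *ᵥ β
  set d := β' - β
  have hlin : (Xᵀ *ᵥ r) ⬝ᵥ d ≤ lam * (∑ k, blockNorm c β' k - ∑ k, blockNorm c β k) := by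
    rw [← sum_blockInner, mul_sub, mul_sum, mul_sum, ← sum_sub_distrib]
    refine sum_le_sum fun k _ => ?_
    rw [← mul_sub]
    exact blockInner_sub_le_of_subgradient hlam
      (fun hk i hi => hi ▸ hstat i (hi ▸ hk)) (hdual k)
  have hres : w - X *ᵥ β' = r - X *ᵥ d := by
    simp only [r, d, mulVec_sub]
    abel
  have hexp : (w - X *ᵥ β') ⬝ᵥ (w - X *ᵥ β')
      = r ⬝ᵥ r - 2 * ((Xᵀ *ᵥ r) ⬝ᵥ d) + (X *ᵥ d) ⬝ᵥ (X *ᵥ d) := by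
    rw [hres, mulVec_transpose, ← dotProduct_mulVec]
    simp only [dotProduct_sub, sub_dotProduct, dotProduct_comm (X *ᵥ d) r]
    ring
  have hsq : 0 ≤ (X *ᵥ d) ⬝ᵥ (X *ᵥ d) := sum_nonneg fun q _ => mul_self_nonneg _
  show groupLassoObj X w lam c β ≤ groupLassoObj X w lam c β'
  simp only [groupLassoObj, sum_sq_sub_mulVec, hexp]
  linarith

lemma hasDerivAt_sum_sq_line (w : Fin Q → ℝ) (β v : Fin N → ℝ) :
    HasDerivAt (fun t : ℝ => (1 / 2) * ∑ q, (w q - X.mulVec (β + t • v) q) ^ 2)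
      (-((Xᵀ *ᵥ (w - X *ᵥ β)) ⬝ᵥ v)) 0 := by
  have hq : ∀ q, HasDerivAt (fun t : ℝ => (w q - X.mulVec (β + t • v) q) ^ 2)
      (2 * (w - X *ᵥ β) q * -(X *ᵥ v) q) 0 := by
    intro q
    have hline : (fun t : ℝ => (w q - X.mulVec (β + t • v) q) ^ 2)
        = fun t => ((w - X *ᵥ β) q - t * (X *ᵥ v) q) ^ 2 := by
      ext t
      simp only [mulVec_add, mulVec_smul, Pi.add_apply, Pi.sub_apply, Pi.smul_apply, smul_eq_mul]
      ring
    rw [hline]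
    exact ((((hasDerivAt_id' (0 : ℝ)).mul_const ((X *ᵥ v) q)).const_sub
      ((w - X *ᵥ β) q)).fun_pow 2).congr_deriv (by simp)
  refine ((HasDerivAt.fun_sum fun q _ => hq q).const_mul (1 / 2 : ℝ)).congr_deriv ?_
  rw [mulVec_transpose, ← dotProduct_mulVec]
  simp only [dotProduct, mul_sum, ← sum_neg_distrib]
  exact sum_congr rfl fun q _ => by ring

lemma hasDerivAt_sum_blockNorm_line {β v : Fin N → ℝ}
    (hv : ∀ i, v i ≠ 0 → blockNorm c β (c i) ≠ 0) :
    HasDerivAt (fun t : ℝ => ∑ k, blockNorm c (β + t • v) k)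
      (∑ k, blockInner c k β v / blockNorm c β k) 0 := by
  refine HasDerivAt.fun_sum fun k _ => ?_
  by_cases hk : blockNorm c β k = 0
  · have hvk : ∀ i ∈ univ.filter (fun i => c i = k), v i = 0 := fun i hi =>
      not_not.1 fun h => hv i h ((mem_filter.1 hi).2 ▸ hk)
    have hconst : (fun t : ℝ => blockNorm c (β + t • v) k) = fun _ => blockNorm c β k := by
      funext t
      simp only [blockNorm]
      congr 1
      exact sum_congr rfl fun i hi => by simp [hvk i hi]
    rw [hconst, hk, div_zero]
    exact hasDerivAt_const _ _
  · exact hasDerivAt_blockNorm_line v hk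

lemma blockInner_single_one (β : Fin N → ℝ) (i : Fin N) (k : Fin K) :
    blockInner c k β (Pi.single i 1) = if c i = k then β i else 0 := by
  simp [blockInner, Pi.single_apply]

theorem kkt_stationarity_of_isMinOn {w : Fin Q → ℝ} {β : Fin N → ℝ}
    (hmin : IsMinOn (groupLassoObj X w lam c) Set.univ β) {i : Fin N}
    (hi : blockNorm c β (c i) ≠ 0) :
    (Xᵀ *ᵥ (w - X *ᵥ β)) i = lam * (β i / blockNorm c β (c i)) := by
  have hv : ∀ j, (Pi.single i 1 : Fin N → ℝ) j ≠ 0 → blockNorm c β (c j) ≠ 0 := by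
    intro j hj
    rw [Pi.single_apply] at hj
    split_ifs at hj with hji
    · exact hji ▸ hi
    · exact absurd rfl hj
  have hderiv := (hasDerivAt_sum_sq_line X w β (Pi.single i 1)).add
    ((hasDerivAt_sum_blockNorm_line hv).const_mul lam)
  have hloc : IsLocalMin (fun t : ℝ => groupLassoObj X w lam c (β + t • Pi.single i 1)) 0 :=
    Eventually.of_forall fun t => by simpa using hmin (Set.mem_univ (β + t • Pi.single i 1))
  have := hloc.hasDerivAt_eq_zero hderiv
  simp only [blockInner_single_one, ite_div, zero_div, sum_ite_eq, mem_univ, if_true,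
    dotProduct_single_one] at this
  linarith

end Optimality

section KKTMap

variable (X : Matrix (Fin Q) (Fin N) ℝ) (lam : ℝ) (c : Fin N → Fin K) (s : Finset (Fin K))

noncomputable def kktMap (x : (Fin Q → ℝ) × (Fin N → ℝ)) : Fin N → ℝ := fun i =>
  if c i ∈ s then lam * (x.2 i / blockNorm c x.2 (c i)) - (Xᵀ *ᵥ (x.1 - X *ᵥ x.2)) i
  else x.2 i

def kktRegion : Set ((Fin Q → ℝ) × (Fin N → ℝ)) :=
  {x | (∀ k ∈ s, blockNorm c x.2 k ≠ 0) ∧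
    ∀ k ∉ s, blockNorm c (Xᵀ *ᵥ (x.1 - X *ᵥ x.2)) k < lam}

/-- The map `λ δ_β ∘ P_β` of the paper, i.e. the Hessian of `λ ∑_b ‖β_b‖`. -/
noncomputable def groupNormHessian (β v : Fin N → ℝ) : Fin N → ℝ := fun i =>
  lam / blockNorm c β (c i) * (v i - blockInner c (c i) β v / blockNorm c β (c i) ^ 2 * β i)

variable {X lam c s}

lemma dotProduct_groupNormHessian_nonneg (hlam : 0 ≤ lam) (β v : Fin N → ℝ) :
    0 ≤ v ⬝ᵥ groupNormHessian lam c β v := by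
  rw [← sum_blockInner]
  refine sum_nonneg fun k _ => ?_
  set n := blockNorm c β k
  set S := blockInner c k β v
  have hterm : ∀ i ∈ univ.filter (fun i => c i = k), v i * groupNormHessian lam c β v i
      = lam / n * (v i * v i) - lam / n * (S / n ^ 2) * (β i * v i) := by
    intro i hi
    rw [groupNormHessian, (mem_filter.1 hi).2]
    ring
  rw [blockInner, sum_congr rfl hterm, sum_sub_distrib, ← mul_sum, ← mul_sum]
  change 0 ≤ lam / n * blockInner c k v v - lam / n * (S / n ^ 2) * blockInner c k β v
  rcases eq_or_ne n 0 with hn | hn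
  · simp [hn]
  have hS : S ^ 2 / n ^ 2 ≤ blockInner c k v v := by
    rw [div_le_iff₀ (by positivity), mul_comm, ← blockNorm_sq]
    exact blockInner_sq_le k β v
  calc 0 ≤ lam / n * (blockInner c k v v - S ^ 2 / n ^ 2) :=
        mul_nonneg (div_nonneg hlam (blockNorm_nonneg _ _)) (sub_nonneg.2 hS)
    _ = _ := by ring

lemma hasDerivAt_mul_div_blockNorm_line {β : Fin N → ℝ} (v : Fin N → ℝ) {i : Fin N}
    (h : blockNorm c β (c i) ≠ 0) :
    HasDerivAt (fun t : ℝ => lam * ((β + t • v) i / blockNorm c (β + t • v) (c i)))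
      (groupNormHessian lam c β v i) 0 := by
  have hcoord : HasDerivAt (fun t : ℝ => (β + t • v) i) (v i) 0 := by
    simpa using ((hasDerivAt_id' (0 : ℝ)).mul_const (v i)).const_add (β i)
  have h0 : blockNorm c (β + (0 : ℝ) • v) (c i) ≠ 0 := by rwa [zero_smul, add_zero]
  refine ((hcoord.div (hasDerivAt_blockNorm_line v h) h0).const_mul lam).congr_deriv ?_
  simp only [zero_smul, add_zero, groupNormHessian]
  field_simp

lemma contDiff_residual_apply {n : WithTop ℕ∞} (i : Fin N) :
    ContDiff ℝ n fun x : (Fin Q → ℝ) × (Fin N → ℝ) => (Xᵀ *ᵥ (x.1 - X *ᵥ x.2)) i := by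
  simp only [mulVec, dotProduct, Pi.sub_apply]
  fun_prop

lemma contDiffAt_kktMap {x : (Fin Q → ℝ) × (Fin N → ℝ)} {n : WithTop ℕ∞}
    (hx : ∀ k ∈ s, blockNorm c x.2 k ≠ 0) : ContDiffAt ℝ n (kktMap X lam c s) x := by
  refine contDiffAt_pi.2 fun i => ?_
  by_cases hi : c i ∈ s
  · simp only [kktMap, hi, if_true]
    have hnorm := (contDiffAt_blockNorm (n := n) (hx _ hi)).comp x contDiffAt_snd
    have hcoord : ContDiffAt ℝ n (fun x : (Fin Q → ℝ) × (Fin N → ℝ) => x.2 i) x := by fun_prop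
    exact (contDiffAt_const.mul (hcoord.div hnorm (hx _ hi))).sub
      (contDiff_residual_apply i).contDiffAt
  · simp only [kktMap, hi, if_false]
    fun_prop

lemma residual_add_smul (x z : (Fin Q → ℝ) × (Fin N → ℝ)) (t : ℝ) :
    Xᵀ *ᵥ ((x + t • z).1 - X *ᵥ (x + t • z).2)
      = Xᵀ *ᵥ (x.1 - X *ᵥ x.2) + t • Xᵀ *ᵥ (z.1 - X *ᵥ z.2) := by
  simp only [Prod.fst_add, Prod.snd_add, Prod.smul_fst, Prod.smul_snd, mulVec_add, mulVec_smul,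
    mulVec_sub, smul_sub]
  abel

lemma fderiv_kktMap_apply {x : (Fin Q → ℝ) × (Fin N → ℝ)}
    (hx : ∀ k ∈ s, blockNorm c x.2 k ≠ 0) (z : (Fin Q → ℝ) × (Fin N → ℝ)) (i : Fin N) :
    fderiv ℝ (kktMap X lam c s) x z i = if c i ∈ s then
      groupNormHessian lam c x.2 z.2 i - (Xᵀ *ᵥ (z.1 - X *ᵥ z.2)) i else z.2 i := by
  have hG := ((contDiffAt_kktMap (X := X) (lam := lam) (n := 1) hx).differentiableAt
    one_ne_zero).hasFDerivAt
  have hline : HasDerivAt (fun t : ℝ => kktMap X lam c s (x + t • z))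
      (fderiv ℝ (kktMap X lam c s) x z) 0 := by
    have hmove : HasDerivAt (fun t : ℝ => x + t • z) z 0 := by
      simpa using ((hasDerivAt_id' (0 : ℝ)).smul_const z).const_add x
    exact hG.comp_hasDerivAt_of_eq (0 : ℝ) hmove (by simp)
  refine (hasDerivAt_pi.1 hline i).unique ?_
  have hres : HasDerivAt (fun t : ℝ => (Xᵀ *ᵥ ((x + t • z).1 - X *ᵥ (x + t • z).2)) i)
      ((Xᵀ *ᵥ (z.1 - X *ᵥ z.2)) i) 0 := by
    simp only [residual_add_smul, Pi.add_apply, Pi.smul_apply, smul_eq_mul]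
    simpa using ((hasDerivAt_id' (0 : ℝ)).mul_const ((Xᵀ *ᵥ (z.1 - X *ᵥ z.2)) i)).const_add
      ((Xᵀ *ᵥ (x.1 - X *ᵥ x.2)) i)
  by_cases hi : c i ∈ s
  · simp only [kktMap, hi, if_true, Prod.snd_add, Prod.smul_snd]
    exact (hasDerivAt_mul_div_blockNorm_line z.2 (hx _ hi)).sub hres
  · simp only [kktMap, hi, if_false, Prod.snd_add, Prod.smul_snd, Pi.add_apply, Pi.smul_apply,
      smul_eq_mul]
    simpa using ((hasDerivAt_id' (0 : ℝ)).mul_const (z.2 i)).const_add (x.2 i)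

lemma eq_zero_of_gram_add_groupNormHessian (hX : LinearIndependent ℝ Xᵀ) (hlam : 0 ≤ lam)
    {β v : Fin N → ℝ}
    (hon : ∀ i, c i ∈ s → (Xᵀ *ᵥ (X *ᵥ v)) i + groupNormHessian lam c β v i = 0)
    (hoff : ∀ i, c i ∉ s → v i = 0) : v = 0 := by
  have hsum : (X *ᵥ v) ⬝ᵥ (X *ᵥ v) + v ⬝ᵥ groupNormHessian lam c β v = 0 := by
    have hgram : v ⬝ᵥ (Xᵀ *ᵥ (X *ᵥ v)) = (X *ᵥ v) ⬝ᵥ (X *ᵥ v) := by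
      rw [dotProduct_mulVec, vecMul_transpose]
    rw [← hgram, ← dotProduct_add]
    refine sum_eq_zero fun i _ => ?_
    by_cases hi : c i ∈ s
    · rw [Pi.add_apply, hon i hi, mul_zero]
    · rw [hoff i hi, zero_mul]
  have hXv : X *ᵥ v = 0 := dotProduct_self_eq_zero.1 <| le_antisymm
    (by linarith [dotProduct_groupNormHessian_nonneg (c := c) hlam β v])
    (sum_nonneg fun q _ => mul_self_nonneg _)
  exact mulVec_injective_iff.2 hX (hXv.trans (mulVec_zero X).symm)

lemma isInvertible_fderiv_kktMap_comp_inr (hX : LinearIndependent ℝ Xᵀ) (hlam : 0 ≤ lam)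
    {x : (Fin Q → ℝ) × (Fin N → ℝ)} (hx : ∀ k ∈ s, blockNorm c x.2 k ≠ 0) :
    (fderiv ℝ (kktMap X lam c s) x ∘L .inr ℝ (Fin Q → ℝ) (Fin N → ℝ)).IsInvertible := by
  set L := fderiv ℝ (kktMap X lam c s) x ∘L .inr ℝ (Fin Q → ℝ) (Fin N → ℝ)
  have hinj : Function.Injective L := by
    refine (injective_iff_map_eq_zero L).2 fun v hv => ?_
    have hrow : ∀ i, L v i = 0 := fun i => congrFun hv i
    simp only [L, ContinuousLinearMap.comp_apply, ContinuousLinearMap.inr_apply,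
      fderiv_kktMap_apply hx, zero_sub, mulVec_neg, Pi.neg_apply, sub_neg_eq_add] at hrow
    refine eq_zero_of_gram_add_groupNormHessian (c := c) (β := x.2) hX hlam (s := s)
      (fun i hi => ?_) fun i hi => ?_
    · simpa [hi, add_comm] using hrow i
    · simpa [hi] using hrow i
  exact ⟨(LinearEquiv.ofInjectiveEndo (L : _ →ₗ[ℝ] _) hinj).toContinuousLinearEquiv, rfl⟩

lemma isOpen_kktRegion : IsOpen (kktRegion X lam c s) := by
  have hres : ∀ k, Continuous fun x : (Fin Q → ℝ) × (Fin N → ℝ) =>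
      blockNorm c (Xᵀ *ᵥ (x.1 - X *ᵥ x.2)) k :=
    fun k => (continuous_blockNorm k).comp (by fun_prop)
  simp only [kktRegion, Set.ofPred_and, Set.ofPred_forall]
  exact (isOpen_iInter_of_finite fun k => isOpen_iInter_of_finite fun _ =>
      isOpen_ne_fun ((continuous_blockNorm k).comp continuous_snd) continuous_const).inter
    (isOpen_iInter_of_finite fun k => isOpen_iInter_of_finite fun _ =>
      isOpen_lt (hres k) continuous_const)

lemma blockNorm_eq_zero_of_kktMap_eq_zero {x : (Fin Q → ℝ) × (Fin N → ℝ)}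
    (hG : kktMap X lam c s x = 0) {k : Fin K} (hk : k ∉ s) : blockNorm c x.2 k = 0 := by
  by_contra h
  obtain ⟨i, rfl, hi⟩ := mem_blockSupport.1 (blockNorm_ne_zero_iff.1 h)
  exact hi (by simpa [kktMap, hk] using congrFun hG i)

lemma blockSupport_eq_of_kktMap_eq_zero {x : (Fin Q → ℝ) × (Fin N → ℝ)}
    (hx : x ∈ kktRegion X lam c s) (hG : kktMap X lam c s x = 0) : blockSupport c x.2 = s := by
  ext k
  exact ⟨fun hk => by_contra fun hks =>
    blockNorm_ne_zero_iff.2 hk (blockNorm_eq_zero_of_kktMap_eq_zero hG hks),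
    fun hk => blockNorm_ne_zero_iff.1 (hx.1 k hk)⟩

theorem isMinOn_of_kktMap_eq_zero (hlam : 0 ≤ lam) {x : (Fin Q → ℝ) × (Fin N → ℝ)}
    (hx : x ∈ kktRegion X lam c s) (hG : kktMap X lam c s x = 0) :
    IsMinOn (groupLassoObj X x.1 lam c) Set.univ x.2 := by
  refine isMinOn_groupLassoObj_of_kkt X hlam (fun i hi => ?_) fun k hk => ?_
  · have hs : c i ∈ s := by_contra fun hs => hi (blockNorm_eq_zero_of_kktMap_eq_zero hG hs)
    have hrow := congrFun hG i
    simp only [kktMap, hs, if_true, Pi.zero_apply, sub_eq_zero] at hrow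
    exact hrow.symm
  · exact (hx.2 k fun hs => hx.1 k hs hk).le

lemma kktMap_blockSupport_eq_zero {w : Fin Q → ℝ} {β : Fin N → ℝ}
    (hmin : IsMinOn (groupLassoObj X w lam c) Set.univ β) :
    kktMap X lam c (blockSupport c β) (w, β) = 0 := by
  funext i
  by_cases hi : c i ∈ blockSupport c β
  · simp only [kktMap, hi, if_true, Pi.zero_apply, sub_eq_zero]
    exact (kkt_stationarity_of_isMinOn X hmin (blockNorm_ne_zero_iff.2 hi)).symm
  · simp only [kktMap, hi, if_false, Pi.zero_apply]
    exact not_not.1 fun h => hi (mem_blockSupport.2 ⟨i, rfl, h⟩)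

theorem exists_contDiffAt_kktMap_eq_zero (hX : LinearIndependent ℝ Xᵀ) (hlam : 0 ≤ lam)
    {x : (Fin Q → ℝ) × (Fin N → ℝ)} (hx : ∀ k ∈ s, blockNorm c x.2 k ≠ 0)
    (hG : kktMap X lam c s x = 0) :
    ∃ ψ : (Fin Q → ℝ) → Fin N → ℝ, ContDiffAt ℝ 1 ψ x.1 ∧ ψ x.1 = x.2 ∧
      ∀ᶠ w in 𝓝 x.1, kktMap X lam c s (w, ψ w) = 0 := by
  have hcd := contDiffAt_kktMap (X := X) (lam := lam) (n := 1) hx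
  have hinv := isInvertible_fderiv_kktMap_comp_inr hX hlam hx
  refine ⟨hcd.implicitFunction one_ne_zero hinv, hcd.contDiffAt_implicitFunction one_ne_zero hinv,
    hcd.implicitFunction_apply_self one_ne_zero hinv, ?_⟩
  simpa only [hG] using hcd.eventually_apply_implicitFunction one_ne_zero hinv

end KKTMap

section Solution

variable {X : Matrix (Fin Q) (Fin N) ℝ} {lam : ℝ} {c : Fin N → Fin K}

theorem eventually_kktMap_solution (hX : LinearIndependent ℝ Xᵀ) (hlam : 0 ≤ lam)
    {βs : (Fin Q → ℝ) → Fin N → ℝ}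
    (hmin : ∀ y, IsMinOn (groupLassoObj X y lam c) Set.univ (βs y))
    (huniq : ∀ y β, IsMinOn (groupLassoObj X y lam c) Set.univ β → β = βs y) {y : Fin Q → ℝ}
    (hstrict : ∀ k, (∀ i, c i = k → βs y i = 0) →
      blockNorm c (Xᵀ *ᵥ (y - X *ᵥ βs y)) k < lam) :
    ∀ᶠ w in 𝓝 y, (w, βs w) ∈ kktRegion X lam c (blockSupport c (βs y)) ∧
      kktMap X lam c (blockSupport c (βs y)) (w, βs w) = 0 ∧ ContDiffAt ℝ 1 βs w := by
  set s := blockSupport c (βs y)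
  have hx₀ : (y, βs y) ∈ kktRegion X lam c s :=
    ⟨fun k hk => blockNorm_ne_zero_iff.2 hk, fun k hk => hstrict k fun i hi =>
      not_not.1 fun h => hk (mem_blockSupport.2 ⟨i, hi, h⟩)⟩
  obtain ⟨ψ, hψ, hψy, hψG⟩ :=
    exists_contDiffAt_kktMap_eq_zero hX hlam hx₀.1 (kktMap_blockSupport_eq_zero (hmin y))
  have hgraph : Tendsto (fun w => (w, ψ w)) (𝓝 y) (𝓝 (y, βs y)) := by
    simpa [hψy] using (continuousAt_id.prodMk hψ.continuousAt).tendsto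
  have hreg : ∀ᶠ w in 𝓝 y, (w, ψ w) ∈ kktRegion X lam c s :=
    hgraph.eventually (isOpen_kktRegion.mem_nhds hx₀)
  have heq : ∀ᶠ w in 𝓝 y, ψ w = βs w := (hreg.and hψG).mono fun w hw =>
    huniq w (ψ w) (isMinOn_of_kktMap_eq_zero (x := (w, ψ w)) hlam hw.1 hw.2)
  have hβs : ContDiffAt ℝ 1 βs y := hψ.congr_of_eventuallyEq (heq.mono fun _ h => h.symm)
  filter_upwards [hreg, hψG, heq, hβs.eventually (by simp)] with w hw hG hwe hcd
  rw [← hwe]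
  exact ⟨hw, hG, hcd⟩

theorem kkt_linearization {s : Finset (Fin K)} {βs : (Fin Q → ℝ) → Fin N → ℝ}
    {D : (Fin Q → ℝ) →L[ℝ] Fin N → ℝ} {w : Fin Q → ℝ}
    (hG : ∀ᶠ w' in 𝓝 w, kktMap X lam c s (w', βs w') = 0)
    (hx : ∀ k ∈ s, blockNorm c (βs w) k ≠ 0) (hD : HasFDerivAt βs D w)
    (v : Fin Q → ℝ) (i : Fin N) :
    (c i ∈ s → ((Xᵀ * X) *ᵥ D v) i + groupNormHessian lam c (βs w) (D v) i = (Xᵀ *ᵥ v) i) ∧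
      (c i ∉ s → D v i = 0) := by
  have hrow := congrFun (fderiv_apply_prodMk_eq_zero
    ((contDiffAt_kktMap (n := 1) hx).differentiableAt one_ne_zero) hD hG v) i
  rw [fderiv_kktMap_apply hx] at hrow
  refine ⟨fun hi => ?_, fun hi => by simpa [hi] using hrow⟩
  simp only [hi, if_true, Pi.zero_apply, mulVec_sub, Pi.sub_apply] at hrow
  rw [← mulVec_mulVec]
  linarith

end Solution

end GroupLasso

open GroupLasso in
/-- Sensitivity of the group Lasso solution: if the solution `β* = βs y` at `y`
has block support `I` and `‖X_bᵀ(y − X β*)‖ < λ` strictly for every block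
`b ∉ I`, then on a neighborhood of `y` the solution map `βs` is C¹ with
constant block support `I`, its differential vanishes on `I^c`, and on `I` it
satisfies `(X_Iᵀ X_I + λ δ_{β*} ∘ P_{β*}) ∘ dβs = X_Iᵀ`, i.e. it equals
`(X_Iᵀ X_I + λ δ_{β*} ∘ P_{β*})⁻¹ X_Iᵀ`. -/
theorem stmt_19 {Q N K : ℕ} (X : Matrix (Fin Q) (Fin N) ℝ)
    (hX : LinearIndependent ℝ X.transpose)
    (lam : ℝ) (hlam : 0 < lam) (c : Fin N → Fin K)
    (βs : (Fin Q → ℝ) → (Fin N → ℝ))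
    (hmin : ∀ y : Fin Q → ℝ, IsMinOn (groupLassoObj X y lam c) Set.univ (βs y))
    (huniq : ∀ (y : Fin Q → ℝ) (β : Fin N → ℝ),
      IsMinOn (groupLassoObj X y lam c) Set.univ β → β = βs y)
    (y : Fin Q → ℝ)
    (hstrict : ∀ k : Fin K, (∀ i, c i = k → βs y i = 0) →
      blockNorm c (X.transpose.mulVec (y - X.mulVec (βs y))) k < lam) :
    ∃ O : Set (Fin Q → ℝ), IsOpen O ∧ y ∈ O ∧
      -- the block support is locally constant, equal to the one at `y`
      (∀ ybar ∈ O, ∀ k : Fin K,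
        (∃ i, c i = k ∧ βs ybar i ≠ 0) ↔ (∃ i, c i = k ∧ βs y i ≠ 0)) ∧
      -- the solution map is C¹ on `O`
      ContDiffOn ℝ 1 βs O ∧
      -- and its differential is characterized as follows
      (∀ ybar ∈ O, ∃ D : (Fin Q → ℝ) →L[ℝ] (Fin N → ℝ),
        HasFDerivAt βs D ybar ∧
        -- the differential vanishes outside the support
        (∀ (v : Fin Q → ℝ) (i : Fin N),
          (∀ j, c j = c i → βs ybar j = 0) → D v i = 0) ∧
        -- on the support, `(X_Iᵀ X_I + λ δ ∘ P) (D v) = X_Iᵀ v`,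
        -- i.e. `D` restricted to `I` equals `(X_Iᵀ X_I + λ δ ∘ P)⁻¹ X_Iᵀ`
        (∀ (v : Fin Q → ℝ) (i : Fin N),
          (∃ j, c j = c i ∧ βs ybar j ≠ 0) →
          (X.transpose * X).mulVec (D v) i +
            lam / blockNorm c (βs ybar) (c i) *
              (D v i -
                (∑ j ∈ Finset.univ.filter (fun j => c j = c i),
                    βs ybar j * D v j) /
                  (blockNorm c (βs ybar) (c i)) ^ 2 * βs ybar i)
            = X.transpose.mulVec v i)) := by
  set s := blockSupport c (βs y)
  refine ⟨{w | ∀ᶠ w' in 𝓝 w, (w', βs w') ∈ kktRegion X lam c s ∧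
      kktMap X lam c s (w', βs w') = 0 ∧ ContDiffAt ℝ 1 βs w'},
    isOpen_setOfPred_eventually_nhds,
    eventually_kktMap_solution hX hlam.le hmin huniq hstrict, fun ybar hybar k => ?_,
    fun w hw => hw.self_of_nhds.2.2.contDiffWithinAt, fun ybar hybar => ?_⟩
  · obtain ⟨hreg, hG, -⟩ := hybar.self_of_nhds
    rw [← mem_blockSupport, ← mem_blockSupport, blockSupport_eq_of_kktMap_eq_zero hreg hG]
  · obtain ⟨hreg, hG, hcd⟩ := hybar.self_of_nhds
    have hsupp : ∀ i, c i ∈ s ↔ ∃ j, c j = c i ∧ βs ybar j ≠ 0 := fun i => by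
      rw [← mem_blockSupport, blockSupport_eq_of_kktMap_eq_zero hreg hG]
    have hD := (hcd.differentiableAt one_ne_zero).hasFDerivAt
    have hlin := kkt_linearization (hybar.mono fun _ h => h.2.1) hreg.1 hD
    refine ⟨_, hD, fun v i hi => (hlin v i).2 fun hs => ?_,
      fun v i hi => (hlin v i).1 ((hsupp i).2 hi)⟩
    obtain ⟨j, hj, hne⟩ := (hsupp i).1 hs
    exact hne (hi j hj)
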